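/- arXiv:1502.07330 — 8 statements merged into one kernel-verified Lean document; each statement's English description precedes it below -/
import Mathlib

section
/- Let 0 < λ < 1 and consider the maps T_m(v) = Mv − u and T_p(v) = Mv + u on ℝ², where M = diag(−λ, λ) and u = (1,1). If λ < 1/√2, then the attractor A_{−λ,λ} of the IFS {T_m, T_p} is totally disconnected. -/
/-- The mixed real attractor `A_{−λ,λ}`. -/
def mixedAttractor (lam : ℝ) : Set (ℝ × ℝ) :=
  {p | ∃ a : ℕ → ℝ, (∀ k, a k = 1 ∨ a k = -1) ∧
    p = (∑' k : ℕ, a k * (-lam) ^ k, ∑' k : ℕ, a k * lam ^ k)}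

/-- One-dimensional signed geometric attractor. -/
def sgnCantor (r : ℝ) : Set ℝ :=
  {x | ∃ b : ℕ → ℝ, (∀ k, b k = 1 ∨ b k = -1) ∧ x = ∑' k : ℕ, b k * r ^ k}

lemma sign_abs_le_one {b : ℕ → ℝ} (hb : ∀ k, b k = 1 ∨ b k = -1) (k : ℕ) : |b k| ≤ 1 := by
  rcases hb k with h | h <;> simp [h]

lemma summable_aux {r : ℝ} (h0 : 0 ≤ r) (h1 : r < 1) {b : ℕ → ℝ} (hb : ∀ k, |b k| ≤ 1) :
    Summable (fun k => b k * r ^ k) := by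
  apply Summable.of_abs
  refine Summable.of_nonneg_of_le (fun k => abs_nonneg _) (fun k => ?_)
    (summable_geometric_of_lt_one h0 h1)
  rw [abs_mul, abs_pow, abs_of_nonneg h0]
  exact mul_le_of_le_one_left (pow_nonneg h0 k) (hb k)

lemma tsum_bound {r : ℝ} (h0 : 0 ≤ r) (h1 : r < 1) {b : ℕ → ℝ} (hb : ∀ k, |b k| ≤ 1) :
    |∑' k : ℕ, b k * r ^ k| ≤ (1 - r)⁻¹ := by
  have hs := summable_aux h0 h1 hb
  have h2 : |∑' k : ℕ, b k * r ^ k| ≤ ∑' k : ℕ, |b k * r ^ k| := by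
    simpa only [Real.norm_eq_abs] using
      norm_tsum_le_tsum_norm (f := fun k => b k * r ^ k) (by simpa only [Real.norm_eq_abs] using hs.abs)
  refine h2.trans ?_
  rw [← tsum_geometric_of_lt_one h0 h1]
  refine Summable.tsum_le_tsum (fun k => ?_) hs.abs (summable_geometric_of_lt_one h0 h1)
  rw [abs_mul, abs_pow, abs_of_nonneg h0]
  exact mul_le_of_le_one_left (pow_nonneg h0 k) (hb k)

lemma tail_bound {r : ℝ} (h0 : 0 ≤ r) (h1 : r < 1) {b : ℕ → ℝ} (hb : ∀ k, |b k| ≤ 1) (n : ℕ) :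
    |∑' k : ℕ, b (k + n) * r ^ (k + n)| ≤ r ^ n * (1 - r)⁻¹ := by
  have hc : ∀ k : ℕ, b (k + n) * r ^ (k + n) = r ^ n * (b (k + n) * r ^ k) := by
    intro k; rw [pow_add]; ring
  rw [tsum_congr hc, tsum_mul_left, abs_mul, abs_of_nonneg (pow_nonneg h0 n)]
  exact mul_le_mul_of_nonneg_left (tsum_bound h0 h1 (fun k => hb (k + n))) (pow_nonneg h0 n)

lemma sum_Ico_bound {r : ℝ} (h0 : 0 ≤ r) (h1 : r < 1) {b : ℕ → ℝ} (hb : ∀ k, |b k| ≤ 1)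
    (a n : ℕ) : |∑ k ∈ Finset.Ico a n, b k * r ^ k| ≤ r ^ a * (1 - r)⁻¹ := by
  calc |∑ k ∈ Finset.Ico a n, b k * r ^ k| ≤ ∑ k ∈ Finset.Ico a n, |b k * r ^ k| :=
        Finset.abs_sum_le_sum_abs _ _
    _ ≤ ∑ k ∈ Finset.Ico a n, r ^ k := by
        refine Finset.sum_le_sum (fun k _ => ?_)
        rw [abs_mul, abs_pow, abs_of_nonneg h0]
        exact mul_le_of_le_one_left (pow_nonneg h0 k) (hb k)
    _ = ∑ k ∈ Finset.range (n - a), r ^ (a + k) := Finset.sum_Ico_eq_sum_range _ _ _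
    _ = r ^ a * ∑ k ∈ Finset.range (n - a), r ^ k := by simp [pow_add, Finset.mul_sum]
    _ ≤ r ^ a * (1 - r)⁻¹ := by
        refine mul_le_mul_of_nonneg_left ?_ (pow_nonneg h0 a)
        rw [← tsum_geometric_of_lt_one h0 h1]
        exact Summable.sum_le_tsum _ (fun i _ => pow_nonneg h0 i) (summable_geometric_of_lt_one h0 h1)

lemma decomp {r : ℝ} (h0 : 0 ≤ r) (h1 : r < 1) {b : ℕ → ℝ} (hb : ∀ k, |b k| ≤ 1) (n : ℕ) :
    ∃ T : ℝ, |T| ≤ r ^ (n + 1) * (1 - r)⁻¹ ∧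
      ∑' k : ℕ, b k * r ^ k = (∑ k ∈ Finset.range n, b k * r ^ k) + b n * r ^ n + T := by
  refine ⟨∑' k : ℕ, b (k + (n + 1)) * r ^ (k + (n + 1)), tail_bound h0 h1 hb (n + 1), ?_⟩
  have hsum := Summable.sum_add_tsum_nat_add (f := fun k => b k * r ^ k) (n + 1) (summable_aux h0 h1 hb)
  rw [Finset.sum_range_succ] at hsum
  linarith

lemma sgnCantor_gap {r : ℝ} (h0 : 0 < r) (h2 : r < 1 / 2) {x y : ℝ}
    (hx : x ∈ sgnCantor r) (hy : y ∈ sgnCantor r) (hxy : x < y) :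
    ∃ z, x < z ∧ z < y ∧ z ∉ sgnCantor r := by
  obtain ⟨ε, hε, rfl⟩ := hx
  obtain ⟨δ, hδ, rfl⟩ := hy
  have h1 : r < 1 := by linarith
  have h0' : 0 ≤ r := le_of_lt h0
  have hεa := sign_abs_le_one hε
  have hδa := sign_abs_le_one hδ
  have hkey : ∀ j : ℕ, r ^ (j + 1) * (1 - r)⁻¹ < r ^ j := by
    intro j
    have hrj : (0:ℝ) < r ^ j := pow_pos h0 j
    have hlt : r * (1 - r)⁻¹ < 1 := by
      rw [← div_eq_mul_inv, div_lt_one (by linarith)]; linarith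
    calc r ^ (j + 1) * (1 - r)⁻¹ = r ^ j * (r * (1 - r)⁻¹) := by ring
      _ < r ^ j * 1 := mul_lt_mul_of_pos_left hlt hrj
      _ = r ^ j := mul_one _
  have hne : ∃ k, ε k ≠ δ k := by
    by_contra hc
    push_neg at hc
    rw [funext hc] at hxy
    exact lt_irrefl _ hxy
  set n := Nat.find hne with hn
  have hnd : ε n ≠ δ n := Nat.find_spec hne
  have hmin : ∀ k < n, ε k = δ k := fun k hk => by
    by_contra hc; exact Nat.find_min hne hk hc
  set S := ∑ k ∈ Finset.range n, ε k * r ^ k with hS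
  obtain ⟨Tx, hTx, hXd⟩ := decomp h0' h1 hεa n
  obtain ⟨Ty, hTy, hYd⟩ := decomp h0' h1 hδa n
  have hSd : ∑ k ∈ Finset.range n, δ k * r ^ k = S :=
    Finset.sum_congr rfl (fun k hk => by rw [hmin k (Finset.mem_range.mp hk)])
  rw [hSd] at hYd
  have hTx' := abs_le.mp hTx
  have hTy' := abs_le.mp hTy
  have hk := hkey n
  have hsign : ε n = -1 ∧ δ n = 1 := by
    rcases hε n with he | he <;> rcases hδ n with hd | hd
    · exact absurd (he.trans hd.symm) hnd
    · exfalso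
      rw [hXd, hYd, he, hd] at hxy
      linarith [hTx'.1, hTy'.2]
    · exact ⟨he, hd⟩
    · exact absurd (he.trans hd.symm) hnd
  obtain ⟨he, hd⟩ := hsign
  rw [he] at hXd
  rw [hd] at hYd
  refine ⟨S, ?_, ?_, ?_⟩
  · rw [hXd]; linarith [hTx'.2]
  · rw [hYd]; linarith [hTy'.1]
  · rintro ⟨γ, hγ, hzz⟩
    have hγa := sign_abs_le_one hγ
    by_cases hcase : ∀ k < n, γ k = ε k
    · obtain ⟨T, hT, hd2⟩ := decomp h0' h1 hγa n
      have hpre : ∑ k ∈ Finset.range n, γ k * r ^ k = S :=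
        Finset.sum_congr rfl (fun k hk => by rw [hcase k (Finset.mem_range.mp hk)])
      rw [hpre] at hd2
      rw [← hzz] at hd2
      have hT' := abs_le.mp hT
      rcases hγ n with hg | hg <;> rw [hg] at hd2 <;> linarith [hT'.1, hT'.2, hkey n]
    · push_neg at hcase
      set m := Nat.find hcase with hm
      obtain ⟨hmn, hmd⟩ := Nat.find_spec hcase
      have hmmin : ∀ k < m, γ k = ε k := fun k hk => by
        by_contra hc
        exact Nat.find_min hcase hk ⟨lt_trans hk hmn, hc⟩
      obtain ⟨T, hT, hd2⟩ := decomp h0' h1 hγa m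
      have hsplit : S = (∑ k ∈ Finset.range m, γ k * r ^ k) + ε m * r ^ m
          + ∑ k ∈ Finset.Ico (m + 1) n, ε k * r ^ k := by
        have hP : ∑ k ∈ Finset.range m, γ k * r ^ k = ∑ k ∈ Finset.range m, ε k * r ^ k :=
          Finset.sum_congr rfl (fun k hk => by rw [hmmin k (Finset.mem_range.mp hk)])
        rw [hP, hS, Finset.range_eq_Ico,
          ← Finset.sum_Ico_consecutive (fun k => ε k * r ^ k) (Nat.zero_le (m + 1)) hmn,
          ← Finset.range_eq_Ico, Finset.sum_range_succ]
      have hIco := abs_le.mp (sum_Ico_bound h0' h1 hεa (m + 1) n)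
      rw [← hzz, hsplit] at hd2
      have hT' := abs_le.mp hT
      have hk' := hkey m
      rcases hγ m with hg | hg <;> rcases hε m with hee | hee <;>
        first
        | (exact absurd (hg.trans hee.symm) hmd)
        | (rw [hg, hee] at hd2; linarith [hT'.1, hT'.2, hIco.1, hIco.2, hk'])

lemma sgnCantor_subsingleton {r : ℝ} (h0 : 0 < r) (h2 : r < 1 / 2) {s : Set ℝ}
    (hs : s ⊆ sgnCantor r) (hp : IsPreconnected s) : s.Subsingleton := by
  intro x hx y hy
  by_contra hne
  rcases lt_or_gt_of_ne hne with hlt | hlt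
  · obtain ⟨z, hz1, hz2, hz3⟩ := sgnCantor_gap h0 h2 (hs hx) (hs hy) hlt
    exact hz3 (hs (hp.Icc_subset hx hy ⟨le_of_lt hz1, le_of_lt hz2⟩))
  · obtain ⟨z, hz1, hz2, hz3⟩ := sgnCantor_gap h0 h2 (hs hy) (hs hx) hlt
    exact hz3 (hs (hp.Icc_subset hy hx ⟨le_of_lt hz1, le_of_lt hz2⟩))

lemma mem_sgnCantor_of_attractor {lam : ℝ} (h0 : 0 < lam) (h1 : lam < 1) {v : ℝ × ℝ}
    (hv : v ∈ mixedAttractor lam) :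
    (v.1 + v.2) / 2 ∈ sgnCantor (lam ^ 2) ∧ (v.2 - v.1) / (2 * lam) ∈ sgnCantor (lam ^ 2) := by
  obtain ⟨a, ha, hveq⟩ := hv
  have haa := sign_abs_le_one ha
  have hl2 : lam ^ 2 < 1 := by nlinarith
  have hl2' : (0:ℝ) ≤ lam ^ 2 := sq_nonneg lam
  have hsE : Summable (fun j => a (2 * j) * (lam ^ 2) ^ j) :=
    summable_aux hl2' hl2 (fun j => haa _)
  have hsO : Summable (fun j => a (2 * j + 1) * (lam ^ 2) ^ j) :=
    summable_aux hl2' hl2 (fun j => haa _)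
  set E := ∑' j : ℕ, a (2 * j) * (lam ^ 2) ^ j with hE
  set O := ∑' j : ℕ, a (2 * j + 1) * (lam ^ 2) ^ j with hO
  have h2k : ∀ j : ℕ, a (2 * j) * lam ^ (2 * j) = a (2 * j) * (lam ^ 2) ^ j := fun j => by
    rw [pow_mul]
  have h2k1 : ∀ j : ℕ, a (2 * j + 1) * lam ^ (2 * j + 1) = lam * (a (2 * j + 1) * (lam ^ 2) ^ j) :=
    fun j => by rw [pow_succ, pow_mul]; ring
  have h2km : ∀ j : ℕ, a (2 * j) * (-lam) ^ (2 * j) = a (2 * j) * (lam ^ 2) ^ j := fun j => by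
    rw [pow_mul, neg_sq]
  have h2km1 : ∀ j : ℕ, a (2 * j + 1) * (-lam) ^ (2 * j + 1)
      = -(lam * (a (2 * j + 1) * (lam ^ 2) ^ j)) := fun j => by
    rw [pow_succ, pow_mul, neg_sq]; ring
  have hy : ∑' k : ℕ, a k * lam ^ k = E + lam * O := by
    have ht := tsum_even_add_odd (f := fun k => a k * lam ^ k)
      ((summable_congr h2k).mpr hsE) ((summable_congr h2k1).mpr (hsO.mul_left lam))
    rw [tsum_congr h2k, tsum_congr h2k1, tsum_mul_left] at ht
    rw [← ht, ← hE, ← hO]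
  have hx : ∑' k : ℕ, a k * (-lam) ^ k = E - lam * O := by
    have ht := tsum_even_add_odd (f := fun k => a k * (-lam) ^ k)
      ((summable_congr h2km).mpr hsE) ((summable_congr h2km1).mpr ((hsO.mul_left lam).neg))
    rw [tsum_congr h2km, tsum_congr h2km1, tsum_neg, tsum_mul_left] at ht
    rw [← ht, ← hE, ← hO]
    ring
  have hv1 : v.1 = E - lam * O := by rw [hveq]; exact hx
  have hv2 : v.2 = E + lam * O := by rw [hveq]; exact hy
  have hlne : lam ≠ 0 := ne_of_gt h0
  constructor
  · refine ⟨fun j => a (2 * j), fun j => ha _, ?_⟩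
    rw [hv1, hv2, ← hE]; ring
  · refine ⟨fun j => a (2 * j + 1), fun j => ha _, ?_⟩
    rw [hv1, hv2, ← hO]
    field_simp
    ring

theorem mixedAttractor_totallyDisconnected (lam : ℝ) (h0 : 0 < lam) (h1 : lam < 1)
    (h : lam < 1 / Real.sqrt 2) :
    IsTotallyDisconnected (mixedAttractor lam) := by
  intro t hts hpre p hp q hq
  have hs2 : (0:ℝ) < Real.sqrt 2 := by positivity
  have hsq : Real.sqrt 2 ^ 2 = 2 := Real.sq_sqrt (by norm_num)
  have h' : lam * Real.sqrt 2 < 1 := by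
    rw [lt_div_iff₀ hs2] at h; exact h
  have hrl : lam ^ 2 < 1 / 2 := by nlinarith [mul_pos h0 hs2]
  have hr0 : (0:ℝ) < lam ^ 2 := by positivity
  have hlne : lam ≠ 0 := ne_of_gt h0
  have hfc : Continuous (fun v : ℝ × ℝ => (v.1 + v.2) / 2) := by continuity
  have hgc : Continuous (fun v : ℝ × ℝ => (v.2 - v.1) / (2 * lam)) := by continuity
  have hf : ((fun v : ℝ × ℝ => (v.1 + v.2) / 2) '' t).Subsingleton := by
    refine sgnCantor_subsingleton hr0 hrl ?_ (hpre.image _ hfc.continuousOn)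
    rintro _ ⟨v, hv, rfl⟩
    exact (mem_sgnCantor_of_attractor h0 h1 (hts hv)).1
  have hg : ((fun v : ℝ × ℝ => (v.2 - v.1) / (2 * lam)) '' t).Subsingleton := by
    refine sgnCantor_subsingleton hr0 hrl ?_ (hpre.image _ hgc.continuousOn)
    rintro _ ⟨v, hv, rfl⟩
    exact (mem_sgnCantor_of_attractor h0 h1 (hts hv)).2
  have e1 : (p.1 + p.2) / 2 = (q.1 + q.2) / 2 :=
    hf ⟨p, hp, rfl⟩ ⟨q, hq, rfl⟩
  have e2 : (p.2 - p.1) / (2 * lam) = (q.2 - q.1) / (2 * lam) :=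
    hg ⟨p, hp, rfl⟩ ⟨q, hq, rfl⟩
  have e2' : p.2 - p.1 = q.2 - q.1 := by
    field_simp at e2; linarith
  have e1' : p.1 + p.2 = q.1 + q.2 := by linarith
  exact Prod.ext (by linarith) (by linarith)
end

section
/- Let 1/√2 ≤ λ < 1 and let A_{−λ,λ} = { (Σ_{k≥0} a_k(−λ)^k, Σ_{k≥0} a_k λ^k) : a_k ∈ {−1,+1} }. Then A_{−λ,λ} is a parallelogram: under the linear change of coordinates (x,y) ↦ ((x+y)/2, (x−y)/2), the image of A_{−λ,λ} is the rectangle [−1/(1−λ²), 1/(1−λ²)] × [−λ/(1−λ²), λ/(1−λ²)]. -/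
/-- The greedy ±1 expansion remainder sequence. -/
noncomputable def expandSeq (μ x : ℝ) : ℕ → ℝ
  | 0 => x
  | n + 1 => (expandSeq μ x n - (if 0 ≤ expandSeq μ x n then 1 else -1)) / μ

lemma summable_signs {μ : ℝ} (hμ0 : 0 ≤ μ) (hμ1 : μ < 1) {b : ℕ → ℝ}
    (hb : ∀ k, b k = 1 ∨ b k = -1) : Summable (fun k => b k * μ ^ k) := by
  apply Summable.of_norm
  have : (fun k => ‖b k * μ ^ k‖) = fun k => μ ^ k := by
    funext k
    rcases hb k with h | h <;>
      simp [h, abs_mul, abs_pow, abs_of_nonneg hμ0]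
  rw [this]
  exact summable_geometric_of_lt_one hμ0 hμ1

lemma abs_tsum_signs {μ : ℝ} (hμ0 : 0 ≤ μ) (hμ1 : μ < 1) {b : ℕ → ℝ}
    (hb : ∀ k, b k = 1 ∨ b k = -1) : |∑' k, b k * μ ^ k| ≤ 1 / (1 - μ) := by
  have hsum : Summable fun k => ‖b k * μ ^ k‖ := by
    have : (fun k => ‖b k * μ ^ k‖) = fun k => μ ^ k := by
      funext k
      rcases hb k with h | h <;>
        simp [h, abs_mul, abs_pow, abs_of_nonneg hμ0]
    rw [this]
    exact summable_geometric_of_lt_one hμ0 hμ1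
  calc |∑' k, b k * μ ^ k| ≤ ∑' k, ‖b k * μ ^ k‖ := norm_tsum_le_tsum_norm hsum
    _ = ∑' k, μ ^ k := by
        congr 1; funext k
        rcases hb k with h | h <;>
          simp [h, abs_mul, abs_pow, abs_of_nonneg hμ0]
    _ = 1 / (1 - μ) := by
        rw [tsum_geometric_of_lt_one hμ0 hμ1, one_div]

/-- Every point of `[-1/(1-μ), 1/(1-μ)]` has a ±1 expansion in base `μ` when
`1/2 ≤ μ < 1`. -/
lemma exists_signs {μ : ℝ} (hμ0 : 1 / 2 ≤ μ) (hμ1 : μ < 1) {x : ℝ}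
    (hx : |x| ≤ 1 / (1 - μ)) :
    ∃ b : ℕ → ℝ, (∀ k, b k = 1 ∨ b k = -1) ∧ HasSum (fun k => b k * μ ^ k) x := by
  have hμpos : (0 : ℝ) < μ := by linarith
  have h1μ : (0 : ℝ) < 1 - μ := by linarith
  set S := 1 / (1 - μ) with hS
  have hSpos : 0 < S := by positivity
  have hSmul : S * (1 - μ) = 1 := by rw [hS]; field_simp
  have hμS : 1 ≤ μ * S := by
    rw [hS, mul_one_div, le_div_iff₀ h1μ]
    linarith
  set b : ℕ → ℝ := fun n => if 0 ≤ expandSeq μ x n then 1 else -1 with hbdef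
  have hbval : ∀ k, b k = 1 ∨ b k = -1 := by
    intro k
    by_cases h : 0 ≤ expandSeq μ x k <;> simp [hbdef, h]
  -- invariant
  have hinv : ∀ n, |expandSeq μ x n| ≤ S := by
    intro n
    induction n with
    | zero => simpa [expandSeq] using hx
    | succ n ih =>
      rw [abs_le] at ih ⊢
      by_cases h : 0 ≤ expandSeq μ x n
      · simp only [expandSeq, if_pos h]
        constructor
        · rw [le_div_iff₀ hμpos]; nlinarith
        · rw [div_le_iff₀ hμpos]; nlinarith
      · simp only [expandSeq, if_neg h]
        push_neg at h
        constructor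
        · rw [le_div_iff₀ hμpos]; nlinarith
        · rw [div_le_iff₀ hμpos]; nlinarith
  -- partial sum identity
  have hpart : ∀ n, x = (∑ k ∈ Finset.range n, b k * μ ^ k) + μ ^ n * expandSeq μ x n := by
    intro n
    induction n with
    | zero => simp [expandSeq]
    | succ n ih =>
      rw [Finset.sum_range_succ]
      have : μ ^ (n + 1) * expandSeq μ x (n + 1) = μ ^ n * expandSeq μ x n - b n * μ ^ n := by
        simp only [expandSeq, hbdef, pow_succ]
        split_ifs with h <;> field_simp <;> ring
      rw [this]
      linarith [ih]
  have hsum : Summable (fun k => b k * μ ^ k) := summable_signs hμpos.le hμ1 hbval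
  have htend : Filter.Tendsto (fun n => ∑ k ∈ Finset.range n, b k * μ ^ k)
      Filter.atTop (nhds x) := by
    have h0 : Filter.Tendsto (fun n => μ ^ n * expandSeq μ x n) Filter.atTop (nhds 0) := by
      apply squeeze_zero_norm (a := fun n => S * μ ^ n)
      · intro n
        rw [norm_mul, norm_pow, Real.norm_eq_abs, Real.norm_eq_abs,
          abs_of_pos hμpos, mul_comm]
        exact mul_le_mul_of_nonneg_right (hinv n) (pow_nonneg hμpos.le n)
      · simpa using (tendsto_pow_atTop_nhds_zero_of_lt_one hμpos.le hμ1).const_mul S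
    have : (fun n => ∑ k ∈ Finset.range n, b k * μ ^ k) =
        fun n => x - μ ^ n * expandSeq μ x n := by
      funext n; linarith [hpart n]
    rw [this]
    simpa using (tendsto_const_nhds (x := x)).sub h0
  have := hsum.hasSum.tendsto_sum_nat
  have hxeq : ∑' k, b k * μ ^ k = x := tendsto_nhds_unique this htend
  exact ⟨b, hbval, hxeq ▸ hsum.hasSum⟩

theorem mixedAttractor_is_parallelogram (lam : ℝ) (h0 : 1 / Real.sqrt 2 ≤ lam)
    (h1 : lam < 1) :
    (fun p : ℝ × ℝ => ((p.1 + p.2) / 2, (p.1 - p.2) / 2)) '' mixedAttractor lam =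
      Set.Icc (-(1 / (1 - lam ^ 2))) (1 / (1 - lam ^ 2)) ×ˢ
        Set.Icc (-(lam / (1 - lam ^ 2))) (lam / (1 - lam ^ 2)) := by
  have hs2 : (0:ℝ) < Real.sqrt 2 := Real.sqrt_pos.2 (by norm_num)
  have hlam0 : 0 < lam := lt_of_lt_of_le (by positivity) h0
  have hμhalf : 1 / 2 ≤ lam ^ 2 := by
    have : (1 / Real.sqrt 2) ^ 2 ≤ lam ^ 2 := by
      apply pow_le_pow_left₀ (by positivity) h0
    rwa [div_pow, one_pow, Real.sq_sqrt (by norm_num : (0:ℝ) ≤ 2)] at this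
  set μ := lam ^ 2 with hμdef
  have hμ1 : μ < 1 := by nlinarith
  have hμ0 : 0 < μ := by positivity
  have h1μ : (0:ℝ) < 1 - μ := by linarith
  ext ⟨u, v⟩
  simp only [Set.mem_image, Set.mem_prod, Set.mem_Icc, mixedAttractor, Set.mem_setOf_eq]
  constructor
  · rintro ⟨⟨x, y⟩, ⟨a, ha, hp⟩, heq⟩
    obtain ⟨hx, hy⟩ : x = ∑' k, a k * (-lam) ^ k ∧ y = ∑' k, a k * lam ^ k := by
      constructor <;> simp [Prod.ext_iff] at hp <;> tauto
    -- even/odd split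
    set bb : ℕ → ℝ := fun j => a (2 * j) with hbb
    set cc : ℕ → ℝ := fun j => a (2 * j + 1) with hcc
    have hbbval : ∀ j, bb j = 1 ∨ bb j = -1 := fun j => ha _
    have hccval : ∀ j, cc j = 1 ∨ cc j = -1 := fun j => ha _
    have hsb : Summable (fun j => bb j * μ ^ j) := summable_signs hμ0.le hμ1 hbbval
    have hsc : Summable (fun j => cc j * μ ^ j) := summable_signs hμ0.le hμ1 hccval
    set s := ∑' j, bb j * μ ^ j with hsdef
    set t := ∑' j, cc j * μ ^ j with htdef
    have hμpow : ∀ j : ℕ, μ ^ j = lam ^ (2 * j) := fun j => by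
      rw [hμdef, ← pow_mul]
    have hy' : HasSum (fun k => a k * lam ^ k) (s + lam * t) := by
      apply HasSum.even_add_odd
      · have : HasSum (fun j => bb j * μ ^ j) s := hsb.hasSum
        have heq2 : (fun j => bb j * μ ^ j) = fun j => a (2 * j) * lam ^ (2 * j) := by
          funext j; rw [hμpow, hbb]
        rwa [heq2] at this
      · have := (hsc.hasSum.mul_left lam)
        have heq2 : (fun j => lam * (cc j * μ ^ j)) = fun j => a (2 * j + 1) * lam ^ (2 * j + 1) := by
          funext j; rw [hμpow, pow_succ, hcc]; ring
        rwa [heq2] at this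
    have hx' : HasSum (fun k => a k * (-lam) ^ k) (s - lam * t) := by
      have : s - lam * t = s + (-lam) * t := by ring
      rw [this]
      apply HasSum.even_add_odd
      · have : HasSum (fun j => bb j * μ ^ j) s := hsb.hasSum
        have heq2 : (fun j => bb j * μ ^ j) = fun j => a (2 * j) * (-lam) ^ (2 * j) := by
          funext j
          rw [hμpow, hbb]
          congr 1
          rw [pow_mul, pow_mul, neg_pow, even_two.neg_one_pow, one_mul]
        rwa [heq2] at this
      · have := (hsc.hasSum.mul_left (-lam))
        have heq2 : (fun j => -lam * (cc j * μ ^ j)) = fun j => a (2 * j + 1) * (-lam) ^ (2 * j + 1) := by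
          funext j
          rw [hμpow, hcc, pow_succ]
          rw [pow_mul, pow_mul, neg_pow, even_two.neg_one_pow, one_mul]
          ring
        rwa [heq2] at this
    have hxval : x = s - lam * t := by rw [hx]; exact hx'.tsum_eq
    have hyval : y = s + lam * t := by rw [hy]; exact hy'.tsum_eq
    have hu : u = s := by
      have := heq
      simp only [Prod.mk.injEq] at this
      rw [← this.1, hxval, hyval]; ring
    have hv : v = -(lam * t) := by
      have := heq
      simp only [Prod.mk.injEq] at this
      rw [← this.2, hxval, hyval]; ring
    have hsbound : |s| ≤ 1 / (1 - μ) := abs_tsum_signs hμ0.le hμ1 hbbval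
    have htbound : |t| ≤ 1 / (1 - μ) := abs_tsum_signs hμ0.le hμ1 hccval
    rw [abs_le] at hsbound htbound
    refine ⟨⟨?_, ?_⟩, ?_, ?_⟩
    · rw [hu]; exact hsbound.1
    · rw [hu]; exact hsbound.2
    · rw [hv]
      have : lam / (1 - μ) = lam * (1 / (1 - μ)) := by ring
      rw [this]
      nlinarith [htbound.1, htbound.2]
    · rw [hv]
      have : lam / (1 - μ) = lam * (1 / (1 - μ)) := by ring
      rw [this]
      nlinarith [htbound.1, htbound.2]
  · rintro ⟨⟨hu1, hu2⟩, hv1, hv2⟩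
    -- get expansions for u and -v/lam
    obtain ⟨bb, hbbval, hbbsum⟩ := exists_signs hμhalf hμ1 (x := u) (abs_le.2 ⟨hu1, hu2⟩)
    have hvbound : |-v / lam| ≤ 1 / (1 - μ) := by
      rw [abs_div, abs_neg, abs_of_pos hlam0, div_le_iff₀ hlam0, abs_le]
      have : 1 / (1 - μ) * lam = lam / (1 - μ) := by ring
      rw [this]
      exact ⟨hv1, hv2⟩
    obtain ⟨cc, hccval, hccsum⟩ := exists_signs hμhalf hμ1 hvbound
    set a : ℕ → ℝ := fun k => if Even k then bb (k / 2) else cc (k / 2) with hadef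
    have haval : ∀ k, a k = 1 ∨ a k = -1 := by
      intro k
      by_cases h : Even k
      · simp only [hadef, if_pos h]; exact hbbval _
      · simp only [hadef, if_neg h]; exact hccval _
    have haeven : ∀ j, a (2 * j) = bb j := by
      intro j
      simp [hadef, Nat.mul_div_cancel_left j (by norm_num : 0 < 2)]
    have haodd : ∀ j, a (2 * j + 1) = cc j := by
      intro j
      have : ¬ Even (2 * j + 1) := by simp [parity_simps]
      simp [hadef, this, Nat.mul_add_div (by norm_num : 0 < 2)]
    have hμpow : ∀ j : ℕ, μ ^ j = lam ^ (2 * j) := fun j => by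
      rw [hμdef, ← pow_mul]
    have hy' : HasSum (fun k => a k * lam ^ k) (u + lam * (-v / lam)) := by
      apply HasSum.even_add_odd
      · have := hbbsum
        have heq2 : (fun j => bb j * μ ^ j) = fun j => a (2 * j) * lam ^ (2 * j) := by
          funext j; rw [hμpow, haeven]
        rwa [heq2] at this
      · have := hccsum.mul_left lam
        have heq2 : (fun j => lam * (cc j * μ ^ j)) = fun j => a (2 * j + 1) * lam ^ (2 * j + 1) := by
          funext j; rw [hμpow, haodd, pow_succ]; ring
        rwa [heq2] at this
    have hx' : HasSum (fun k => a k * (-lam) ^ k) (u + (-lam) * (-v / lam)) := by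
      apply HasSum.even_add_odd
      · have := hbbsum
        have heq2 : (fun j => bb j * μ ^ j) = fun j => a (2 * j) * (-lam) ^ (2 * j) := by
          funext j
          rw [hμpow, haeven]
          congr 1
          rw [pow_mul, pow_mul, neg_pow, even_two.neg_one_pow, one_mul]
        rwa [heq2] at this
      · have := hccsum.mul_left (-lam)
        have heq2 : (fun j => -lam * (cc j * μ ^ j)) = fun j => a (2 * j + 1) * (-lam) ^ (2 * j + 1) := by
          funext j
          rw [hμpow, haodd, pow_succ]
          rw [pow_mul, pow_mul, neg_pow, even_two.neg_one_pow, one_mul]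
          ring
        rwa [heq2] at this
    have h2 : u + -lam * (-v / lam) = u + v := by
      field_simp
    have h3 : u + lam * (-v / lam) = u - v := by
      field_simp
      ring
    refine ⟨(u + v, u - v), ⟨a, haval, ?_⟩,
      by simp only [Prod.mk.injEq]; constructor <;> ring⟩
    have hxts : ∑' k, a k * (-lam) ^ k = u + v := by rw [hx'.tsum_eq, h2]
    have hyts : ∑' k, a k * lam ^ k = u - v := by rw [hy'.tsum_eq, h3]
    rw [hxts, hyts]
end

section
/- Let 0 < ν < 1, M = [[ν,1],[0,ν]] (a 2×2 Jordan block), u = (0,1), and define T_a(v) = Mv + a·u for a ∈ {−1,+1}. Then for any sequence (a_i) ∈ {−1,+1}^ℕ, the limit lim_{n→∞} T_{a_0} ∘ T_{a_1} ∘ ⋯ ∘ T_{a_n}(0,0) exists and equals (Σ_{i≥1} i·a_i·ν^{i−1}, Σ_{i≥0} a_i·ν^i). -/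
/-!
Unfolding the composition from the outside, `T_{a_0} ∘ ⋯ ∘ T_{a_n}(0,0)` is `T_{a_0}` applied to
the same expression for the shifted sequence, and induction gives the partial sums
`(∑_{i ≤ n} i a_i ν^{i-1}, ∑_{i ≤ n} a_i ν^i)`, i.e. the entries of `∑ a_i M^i u`. For a bounded
sequence and `|ν| < 1` both series are dominated by `∑ (i + 1) |ν|^i`, so the partial sums converge.
-/

/-- The Jordan block map `T_a(v) = Mv + a·(0,1)` with `M = [[ν,1],[0,ν]]`. -/
def jordanMap (ν : ℝ) (a : ℝ) (v : ℝ × ℝ) : ℝ × ℝ :=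
  (ν * v.1 + v.2, ν * v.2 + a)

/-- `T_{a_0} ∘ T_{a_1} ∘ ⋯ ∘ T_{a_n} (0,0)`. -/
def jordanIter (ν : ℝ) (a : ℕ → ℝ) (n : ℕ) : ℝ × ℝ :=
  (List.range (n + 1)).foldr (fun i v => jordanMap ν (a i) v) (0, 0)

open Filter Finset

lemma jordanIter_succ (ν : ℝ) (a : ℕ → ℝ) (n : ℕ) :
    jordanIter ν a (n + 1) = jordanMap ν (a 0) (jordanIter ν (fun i => a (i + 1)) n) := by
  simp only [jordanIter, List.range_succ_eq_map (n := n + 1), List.foldr_cons, List.foldr_map]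

lemma mul_natCast_mul_pow_pred {R : Type*} [CommSemiring R] (x : R) (i : ℕ) :
    x * ((i : R) * x ^ (i - 1)) = i * x ^ i := by
  rcases i with _ | i
  · simp
  · rw [Nat.add_sub_cancel, pow_succ]
    ring

lemma jordanIter_eq_sum (ν : ℝ) (n : ℕ) (a : ℕ → ℝ) :
    jordanIter ν a n =
      (∑ i ∈ range (n + 1), (i : ℝ) * a i * ν ^ (i - 1), ∑ i ∈ range (n + 1), a i * ν ^ i) := by
  induction n generalizing a with
  | zero => simp [jordanIter, jordanMap]
  | succ n ih =>
    rw [jordanIter_succ, ih, jordanMap, sum_range_succ' _ (n + 1), sum_range_succ' _ (n + 1)]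
    refine Prod.ext ?_ ?_
    · simp only [mul_sum, ← sum_add_distrib, Nat.cast_zero, zero_mul, add_zero]
      refine sum_congr rfl fun i _ => ?_
      have hpow := mul_natCast_mul_pow_pred ν i
      push_cast
      linear_combination a (i + 1) * hpow
    · simp only [mul_sum, pow_zero, mul_one, pow_succ]
      congr 1
      exact sum_congr rfl fun i _ => by ring

section Summability

variable {ν C : ℝ} {a : ℕ → ℝ}

lemma summable_mul_pow_of_abs_le (hν : |ν| < 1) (ha : ∀ i, |a i| ≤ C) :
    Summable fun i => a i * ν ^ i := by
  refine Summable.of_norm_bounded ((summable_geometric_of_lt_one (abs_nonneg ν) hν).mul_left C)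
    fun i => ?_
  rw [Real.norm_eq_abs, abs_mul, abs_pow]
  exact mul_le_mul_of_nonneg_right (ha i) (by positivity)

lemma summable_natCast_mul_mul_pow_pred_of_abs_le (hν : |ν| < 1) (ha : ∀ i, |a i| ≤ C) :
    Summable fun i : ℕ => (i : ℝ) * a i * ν ^ (i - 1) := by
  have hν' : ‖|ν|‖ < 1 := by rwa [Real.norm_eq_abs, abs_abs]
  have hdom : Summable fun i : ℕ => C * (((i : ℝ) + 1) * |ν| ^ i) := by
    refine Summable.mul_left C ?_
    simpa [add_mul] using (summable_pow_mul_geometric_of_norm_lt_one 1 hν').add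
      (summable_geometric_of_norm_lt_one hν')
  refine (summable_nat_add_iff 1).mp (Summable.of_norm_bounded hdom fun i => ?_)
  rw [Real.norm_eq_abs, abs_mul, abs_mul, Nat.add_sub_cancel, abs_pow, Nat.abs_cast]
  push_cast
  calc ((i : ℝ) + 1) * |a (i + 1)| * |ν| ^ i = |a (i + 1)| * (((i : ℝ) + 1) * |ν| ^ i) := by ring
    _ ≤ C * (((i : ℝ) + 1) * |ν| ^ i) := mul_le_mul_of_nonneg_right (ha _) (by positivity)

end Summability

lemma tendsto_jordanIter_of_abs_le {ν C : ℝ} {a : ℕ → ℝ} (hν : |ν| < 1) (ha : ∀ i, |a i| ≤ C) :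
    Tendsto (jordanIter ν a) atTop
      (nhds (∑' i : ℕ, (i : ℝ) * a i * ν ^ (i - 1), ∑' i : ℕ, a i * ν ^ i)) := by
  simp only [funext (jordanIter_eq_sum ν · a)]
  exact .prodMk_nhds
    ((summable_natCast_mul_mul_pow_pred_of_abs_le hν ha).hasSum.tendsto_sum_nat.comp
      (tendsto_add_atTop_nat 1))
    ((summable_mul_pow_of_abs_le hν ha).hasSum.tendsto_sum_nat.comp (tendsto_add_atTop_nat 1))

theorem jordan_limit (ν : ℝ) (h0 : 0 < ν) (h1 : ν < 1)
    (a : ℕ → ℝ) (ha : ∀ i, a i = 1 ∨ a i = -1) :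
    Filter.Tendsto (jordanIter ν a) Filter.atTop
      (nhds (∑' i : ℕ, (i : ℝ) * a i * ν ^ (i - 1), ∑' i : ℕ, a i * ν ^ i)) := by
  refine tendsto_jordanIter_of_abs_le (C := 1) (abs_lt.mpr ⟨by linarith, h1⟩) fun i => ?_
  rcases ha i with h | h <;> simp [h]
end

section
/- More generally, for the k×k Jordan block M = J_{λ,k} (λ on the diagonal, 1 on the superdiagonal), u = (0,…,0,1)ᵀ, and T_a(v) = Mv + a·u, one has for any a_0,…,a_n ∈ {−1,+1} that the r-th coordinate from the bottom of T_{a_0}⋯T_{a_n}(0,…,0) equals Σ_{i=0}^n binom(i, r)·a_i·λ^{i−r}, for r = 0, 1, …, k−1 (with the convention binom(i,r) = 0 for i < r). -/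
/-- The `k×k` Jordan block: `λ` on the diagonal, `1` on the superdiagonal. -/
def jordanBlock (k : ℕ) (lam : ℝ) : Matrix (Fin k) (Fin k) ℝ :=
  Matrix.of fun i j => if (i : ℕ) = (j : ℕ) then lam
    else if (j : ℕ) = (i : ℕ) + 1 then 1 else 0

/-- `u = (0,…,0,1)ᵀ`. -/
def lastBasis (k : ℕ) : Fin k → ℝ := fun i => if (i : ℕ) = k - 1 then 1 else 0

/-- `T_a(v) = J_{λ,k} v + a·u`. -/
def jordanBlockMap (k : ℕ) (lam : ℝ) (a : ℝ) (v : Fin k → ℝ) : Fin k → ℝ :=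
  (jordanBlock k lam).mulVec v + a • lastBasis k

/-- `T_{a_0} ∘ ⋯ ∘ T_{a_n} (0,…,0)`. -/
def jordanBlockIter (k : ℕ) (lam : ℝ) (a : ℕ → ℝ) (n : ℕ) : Fin k → ℝ :=
  (List.range (n + 1)).foldr (fun i v => jordanBlockMap k lam (a i) v) 0

lemma mulVec_jordan (k : ℕ) (lam : ℝ) (v : Fin k → ℝ) (i : Fin k) :
    (jordanBlock k lam).mulVec v i
      = lam * v i + (if h : (i : ℕ) + 1 < k then v ⟨i + 1, h⟩ else 0) := by
  classical
  unfold jordanBlock Matrix.mulVec dotProduct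
  simp only [Matrix.of_apply]
  have : ∀ j : Fin k,
      (if (i : ℕ) = (j : ℕ) then lam else if (j : ℕ) = (i : ℕ) + 1 then (1:ℝ) else 0) * v j
      = (if j = i then lam * v j else 0)
        + (if h : (i : ℕ) + 1 < k then (if j = ⟨i + 1, h⟩ then v j else 0) else 0) := by
    intro j
    by_cases hji : j = i
    · subst hji
      have hne : ∀ h : (j : ℕ) + 1 < k, ¬ (j = ⟨(j : ℕ) + 1, h⟩) := by
        intro h he
        have := congrArg Fin.val he
        simp at this
      simp only [if_pos rfl]
      rcases Nat.lt_or_ge ((j : ℕ) + 1) k with h | h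
      · rw [dif_pos h, if_neg (hne h)]; simp [mul_comm]
      · rw [dif_neg (by omega)]; simp [mul_comm]
    · have : (i : ℕ) ≠ (j : ℕ) := fun h => hji (Fin.ext h.symm)
      simp only [this, if_false, hji, if_false]
      by_cases hk1 : (i : ℕ) + 1 < k
      · by_cases hj1 : (j : ℕ) = (i : ℕ) + 1
        · have : j = ⟨i + 1, hk1⟩ := Fin.ext hj1
          simp [this, hk1, hj1]
        · have : j ≠ ⟨(i:ℕ) + 1, hk1⟩ := fun h => hj1 (by rw [h])
          simp [hk1, hj1, this]
      · have hj1 : (j : ℕ) ≠ (i : ℕ) + 1 := fun h => hk1 (h ▸ j.isLt)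
        simp [hk1, hj1]
  rw [Finset.sum_congr rfl fun j _ => this j, Finset.sum_add_distrib]
  congr 1
  · simp
  · by_cases hk1 : (i : ℕ) + 1 < k <;> simp [hk1]

lemma iter_succ (k : ℕ) (lam : ℝ) (a : ℕ → ℝ) (n : ℕ) :
    jordanBlockIter k lam a (n + 1)
      = jordanBlockMap k lam (a 0) (jordanBlockIter k lam (fun i => a (i + 1)) n) := by
  unfold jordanBlockIter
  rw [List.range_succ_eq_map, List.foldr_cons, List.foldr_map]

theorem jordanBlock_finite_formula (k : ℕ) (hk : 0 < k) (lam : ℝ)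
    (h0 : 0 < |lam|) (h1 : |lam| < 1)
    (a : ℕ → ℝ) (ha : ∀ i, a i = 1 ∨ a i = -1) (n : ℕ)
    (r : ℕ) (hr : r < k) :
    jordanBlockIter k lam a n ⟨k - 1 - r, by omega⟩ =
      ∑ i ∈ Finset.range (n + 1), (i.choose r : ℝ) * a i * lam ^ (i - r) := by
  clear h0 h1 ha
  induction n generalizing a r with
  | zero =>
    show jordanBlockMap k lam (a 0) 0 _ = _
    unfold jordanBlockMap lastBasis
    simp only [Matrix.mulVec_zero, Pi.add_apply, Pi.zero_apply, Pi.smul_apply, zero_add,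
      smul_eq_mul, Finset.range_one, Finset.sum_singleton]
    rcases Nat.eq_zero_or_pos r with hr0 | hr0
    · subst hr0; simp [Nat.sub_zero]
    · have : k - 1 - r ≠ k - 1 := by omega
      simp [this, Nat.choose_eq_zero_of_lt hr0]
  | succ n ih =>
    rw [iter_succ]
    unfold jordanBlockMap
    simp only [Pi.add_apply, Pi.smul_apply, smul_eq_mul]
    rw [mulVec_jordan]
    set v := jordanBlockIter k lam (fun i => a (i + 1)) n with hv
    have hvr : v ⟨k - 1 - r, by omega⟩ = ∑ i ∈ Finset.range (n + 1),
        (i.choose r : ℝ) * a (i + 1) * lam ^ (i - r) := ih _ r hr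
    -- RHS reindex
    rw [Finset.sum_range_succ']  -- ∑_{i<n+2} f i = ∑_{i<n+1} f (i+1) + f 0
    rcases Nat.eq_zero_or_pos r with hr0 | hr0
    · subst hr0
      have hlast : (k - 1 - 0 : ℕ) = k - 1 := by omega
      have hnot : ¬ (k - 1 - 0 + 1 < k) := by omega
      have hlb : lastBasis k ⟨k - 1 - 0, by omega⟩ = 1 := by
        unfold lastBasis; simp [hlast]
      rw [dif_neg hnot, hlb, hvr]
      simp only [Nat.choose_zero_right, Nat.cast_one, one_mul, Nat.sub_zero, pow_zero, mul_one]
      rw [add_zero, Finset.mul_sum]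
      congr 1
      · apply Finset.sum_congr rfl
        intro i _
        ring
    · have h1lt : k - 1 - r + 1 < k := by omega
      have hidx : (⟨k - 1 - r + 1, h1lt⟩ : Fin k) = ⟨k - 1 - (r - 1), by omega⟩ := by
        apply Fin.ext; simp; omega
      have hvr1 : v ⟨k - 1 - (r - 1), by omega⟩ = ∑ i ∈ Finset.range (n + 1),
          (i.choose (r - 1) : ℝ) * a (i + 1) * lam ^ (i - (r - 1)) := ih _ (r - 1) (by omega)
      have hlb : lastBasis k ⟨k - 1 - r, by omega⟩ = 0 := by
        unfold lastBasis
        have : k - 1 - r ≠ k - 1 := by omega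
        simp [this]
      rw [dif_pos h1lt, hidx, hvr1, hvr, hlb, mul_zero, add_zero]
      have hch0 : (Nat.choose 0 r : ℝ) = 0 := by
        rw [Nat.choose_eq_zero_of_lt hr0]; simp
      rw [hch0, zero_mul, zero_mul, add_zero, Finset.mul_sum, ← Finset.sum_add_distrib]
      apply Finset.sum_congr rfl
      intro i _
      have hpas : (i + 1).choose r = i.choose r + i.choose (r - 1) := by
        rcases Nat.exists_eq_add_of_le (Nat.one_le_iff_ne_zero.mpr (by omega) : 1 ≤ r) with ⟨s, hs⟩
        subst hs
        simp [Nat.choose_succ_succ, Nat.add_comm]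
      rcases Nat.lt_or_ge i r with hir | hir
      · -- i < r : both choose terms handled
        rcases Nat.lt_or_ge i (r-1) with hir1 | hir1
        · simp [Nat.choose_eq_zero_of_lt hir, Nat.choose_eq_zero_of_lt hir1,
            Nat.choose_eq_zero_of_lt (show i + 1 < r by omega)]
        · -- i = r - 1
          have hieq : i = r - 1 := by omega
          subst hieq
          rw [hpas, Nat.choose_eq_zero_of_lt hir, Nat.choose_self]
          have e1 : r - 1 + 1 - r = 0 := by omega
          have e2 : r - 1 - (r - 1) = 0 := by omega
          rw [e1, e2]
          push_cast
          ring
      · have e1 : i + 1 - r = (i - r) + 1 := by omega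
        have e2 : i - (r - 1) = (i - r) + 1 := by omega
        rw [hpas, e1, e2]
        push_cast
        ring
end

section
/- Let 0 < λ < μ < 1 and A_{−λ,μ} = { (Σ_{i≥0} a_i(−λ)^i, Σ_{i≥0} a_i μ^i) : a_i ∈ {−1,+1} }. Then the line through π(p^∞) = (1/(1+λ), 1/(1−μ)) with slope −μ/λ is a support line of A_{−λ,μ}: every point (x,y) ∈ A_{−λ,μ} satisfies y − 1/(1−μ) ≤ −(μ/λ)(x − 1/(1+λ)) whenever x ≤ 1/(1+λ), and y ≤ 1/(1−μ) always. -/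
/-!
The linear functional `(x, y) ↦ μ x + λ y` takes the value `∑ aᵢ (λ μ^i + μ (-λ)^i)` at `π(a)`.
Every coefficient `λ μ^i + μ (-λ)^i = λ μ (μ^(i-1) - (-λ)^(i-1))` (for `i ≥ 1`) is nonnegative
because `λ ≤ μ`, so the functional is maximised by `aᵢ ≡ 1`, i.e. at `π(p^∞)`; the same argument
with the coefficients `μ^i` gives `y ≤ 1/(1-μ)`.
-/

section

variable {a : ℕ → ℝ}

lemma summable_mul_pow_of_abs_le_one (ha : ∀ i, |a i| ≤ 1) {r : ℝ} (hr : |r| < 1) :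
    Summable fun i => a i * r ^ i :=
  (summable_geometric_of_lt_one (abs_nonneg r) hr).of_norm_bounded fun i => by
    rw [Real.norm_eq_abs, abs_mul, abs_pow]
    exact mul_le_of_le_one_left (pow_nonneg (abs_nonneg r) i) (ha i)

lemma tsum_mul_pow_le_of_abs_le_one (ha : ∀ i, |a i| ≤ 1) {r : ℝ} (hr0 : 0 ≤ r) (hr1 : r < 1) :
    ∑' i, a i * r ^ i ≤ 1 / (1 - r) := by
  rw [one_div]
  refine hasSum_le (fun i => mul_le_of_le_one_left (pow_nonneg hr0 i) (le_of_abs_le (ha i)))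
    (summable_mul_pow_of_abs_le_one ha (by rwa [abs_of_nonneg hr0])).hasSum
    (hasSum_geometric_of_lt_one hr0 hr1)

lemma mul_pow_add_mul_neg_pow_nonneg {lam mu : ℝ} (hlam : 0 ≤ lam) (hlm : lam ≤ mu) :
    ∀ i : ℕ, 0 ≤ lam * mu ^ i + mu * (-lam) ^ i
  | 0 => by simp only [pow_zero, mul_one]; linarith
  | n + 1 => by
    have hpow : (-lam) ^ n ≤ mu ^ n :=
      calc (-lam) ^ n ≤ |(-lam) ^ n| := le_abs_self _
        _ = lam ^ n := by rw [abs_pow, abs_neg, abs_of_nonneg hlam]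
        _ ≤ mu ^ n := pow_le_pow_left₀ hlam hlm n
    have hfactor : lam * mu ^ (n + 1) + mu * (-lam) ^ (n + 1) =
        lam * mu * (mu ^ n - (-lam) ^ n) := by ring
    rw [hfactor]
    exact mul_nonneg (mul_nonneg hlam (hlam.trans hlm)) (sub_nonneg.mpr hpow)

lemma mul_tsum_add_mul_tsum_le_of_abs_le_one (ha : ∀ i, |a i| ≤ 1) {lam mu : ℝ}
    (hlam : 0 ≤ lam) (hlm : lam ≤ mu) (hmu : mu < 1) :
    lam * ∑' i, a i * mu ^ i + mu * ∑' i, a i * (-lam) ^ i ≤ lam / (1 - mu) + mu / (1 + lam) := by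
  have hmu0 : 0 ≤ mu := hlam.trans hlm
  have hnlam : |-lam| < 1 := by rw [abs_neg, abs_of_nonneg hlam]; linarith
  have hsum_a : HasSum (fun i => a i * (lam * mu ^ i + mu * (-lam) ^ i))
      (lam * ∑' i, a i * mu ^ i + mu * ∑' i, a i * (-lam) ^ i) := by
    refine (((summable_mul_pow_of_abs_le_one ha (by rwa [abs_of_nonneg hmu0])).hasSum.mul_left
      lam).add ((summable_mul_pow_of_abs_le_one ha hnlam).hasSum.mul_left mu)).congr_fun
      fun i => by ring
  have hsum_one : HasSum (fun i => lam * mu ^ i + mu * (-lam) ^ i)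
      (lam / (1 - mu) + mu / (1 + lam)) := by
    have hgeom := ((hasSum_geometric_of_lt_one hmu0 hmu).mul_left lam).add
      ((hasSum_geometric_of_norm_lt_one (Real.norm_eq_abs _ ▸ hnlam)).mul_left mu)
    rwa [sub_neg_eq_add, ← div_eq_mul_inv, ← div_eq_mul_inv] at hgeom
  exact hasSum_le (fun i => mul_le_of_le_one_left (mul_pow_add_mul_neg_pow_nonneg hlam hlm i)
    (le_of_abs_le (ha i))) hsum_a hsum_one

end

theorem support_line_mixed_real (lam mu : ℝ) (h0 : 0 < lam) (h1 : lam < mu) (h2 : mu < 1)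
    (a : ℕ → ℝ) (ha : ∀ i, a i = 1 ∨ a i = -1)
    (x y : ℝ) (hx : x = ∑' i : ℕ, a i * (-lam) ^ i) (hy : y = ∑' i : ℕ, a i * mu ^ i) :
    y ≤ 1 / (1 - mu) ∧
    (x ≤ 1 / (1 + lam) →
      y - 1 / (1 - mu) ≤ -(mu / lam) * (x - 1 / (1 + lam))) := by
  have ha_abs : ∀ i, |a i| ≤ 1 := fun i => by rcases ha i with h | h <;> simp [h]
  refine ⟨hy ▸ tsum_mul_pow_le_of_abs_le_one ha_abs (h0.trans h1).le h2, fun _ => ?_⟩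
  have key := mul_tsum_add_mul_tsum_le_of_abs_le_one ha_abs h0.le h1.le h2
  rw [← hx, ← hy] at key
  have hgap : -(mu / lam) * (x - 1 / (1 + lam)) - (y - 1 / (1 - mu)) =
      (lam / (1 - mu) + mu / (1 + lam) - (lam * y + mu * x)) / lam := by
    field_simp
    ring
  exact sub_nonneg.mp (hgap ▸ div_nonneg (sub_nonneg.mpr key) h0.le)
end

section
/- Let κ ∈ ℂ with 0 < |κ| < 1 and κ ∉ ℝ, and π(a) = Σ_{j≥0} a_j κ^j for a ∈ {−1,+1}^ℕ. Fix φ ∈ [0, 2π) such that Im(κ^j e^{iφ}) ≠ 0 for all j ≥ 0. Define a_j^{(φ)} = sign(Im(κ^j e^{iφ})) ∈ {−1,+1}. Then z = π((a_j^{(φ)})) is the unique maximizer of Im(w·e^{iφ}) over w ∈ A_κ, and (a_j^{(φ)}) is the unique address of z; in particular z is a point of uniqueness. -/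
/-!
Since `‖κ‖ < 1`, the series `π(b) = ∑ b j κ ^ j` converges absolutely for any bounded digits, and
`Im (π(b) w) = ∑ b j Im (κ ^ j w)` termwise. For `|b j| ≤ 1` each term is at most `|Im (κ ^ j w)|`,
which is exactly the term of the digit sequence `b j = sign (Im (κ ^ j w))`; so that sequence maximises
`Im (π(b) w)`. When no `Im (κ ^ j w)` vanishes, any other `±1` sequence is strictly worse at every
digit where it differs, so the maximiser is unique and so is its address.
-/

open Complex

theorem mul_le_abs_of_abs_le_one {b : ℝ} (hb : |b| ≤ 1) (x : ℝ) : b * x ≤ |x| :=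
  calc b * x ≤ |b * x| := le_abs_self _
    _ = |b| * |x| := abs_mul b x
    _ ≤ |x| := mul_le_of_le_one_left (abs_nonneg x) hb

theorem abs_le_one_of_eq_one_or_eq_neg_one {b : ℝ} (hb : b = 1 ∨ b = -1) : |b| ≤ 1 := by
  rcases hb with rfl | rfl <;> simp

theorem ite_pos_one_neg_one_mul_self (x : ℝ) : (if 0 < x then 1 else -1) * x = |x| := by
  split_ifs with hx
  · rw [one_mul, abs_of_pos hx]
  · rw [neg_one_mul, abs_of_nonpos (not_lt.mp hx)]

theorem mul_lt_abs_of_ne_ite {b x : ℝ} (hb : b = 1 ∨ b = -1) (hx : x ≠ 0)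
    (hne : b ≠ if 0 < x then 1 else -1) : b * x < |x| := by
  have hb_neg : b = -if 0 < x then 1 else -1 := by
    rcases hb with rfl | rfl <;> split_ifs at hne ⊢ <;> simp_all
  rw [hb_neg, neg_mul, ite_pos_one_neg_one_mul_self]
  exact neg_lt_self (abs_pos.mpr hx)

section SignSeries

variable {κ : ℂ} {b : ℕ → ℝ}

theorem summable_ofReal_mul_pow (hκ : ‖κ‖ < 1) (hb : ∀ j, |b j| ≤ 1) :
    Summable fun j => (b j : ℂ) * κ ^ j := by
  refine Summable.of_norm_bounded (summable_geometric_of_lt_one (norm_nonneg κ) hκ) fun j => ?_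
  rw [norm_mul, norm_pow, norm_real, Real.norm_eq_abs]
  exact mul_le_of_le_one_left (by positivity) (hb j)

theorem hasSum_mul_im_pow_mul (hκ : ‖κ‖ < 1) (hb : ∀ j, |b j| ≤ 1) (w : ℂ) :
    HasSum (fun j => b j * (κ ^ j * w).im) ((∑' j, (b j : ℂ) * κ ^ j) * w).im := by
  have h := hasSum_im ((summable_ofReal_mul_pow hκ hb).hasSum.mul_right w)
  simpa only [mul_assoc, im_ofReal_mul] using h

variable {a : ℕ → ℝ} {w : ℂ}

theorem im_tsum_mul_le_of_eq_ite (hκ : ‖κ‖ < 1)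
    (ha : ∀ j, a j = if 0 < (κ ^ j * w).im then 1 else -1) (hb : ∀ j, |b j| ≤ 1) :
    ((∑' j, (b j : ℂ) * κ ^ j) * w).im ≤ ((∑' j, (a j : ℂ) * κ ^ j) * w).im := by
  have ha_abs : ∀ j, |a j| ≤ 1 := fun j => by rw [ha j]; split_ifs <;> simp
  refine hasSum_le (fun j => ?_) (hasSum_mul_im_pow_mul hκ hb w)
    (hasSum_mul_im_pow_mul hκ ha_abs w)
  rw [ha j, ite_pos_one_neg_one_mul_self]
  exact mul_le_abs_of_abs_le_one (hb j) _

theorem im_tsum_mul_lt_of_eq_ite (hκ : ‖κ‖ < 1)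
    (ha : ∀ j, a j = if 0 < (κ ^ j * w).im then 1 else -1) (hw : ∀ j, (κ ^ j * w).im ≠ 0)
    (hb : ∀ j, b j = 1 ∨ b j = -1) (hne : b ≠ a) :
    ((∑' j, (b j : ℂ) * κ ^ j) * w).im < ((∑' j, (a j : ℂ) * κ ^ j) * w).im := by
  have hb_abs := fun j => abs_le_one_of_eq_one_or_eq_neg_one (hb j)
  have ha_abs : ∀ j, |a j| ≤ 1 := fun j => by rw [ha j]; split_ifs <;> simp
  have ha_mul : ∀ j, a j * (κ ^ j * w).im = |(κ ^ j * w).im| := fun j => by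
    rw [ha j, ite_pos_one_neg_one_mul_self]
  obtain ⟨i, hi⟩ := Function.ne_iff.mp hne
  refine hasSum_lt (i := i) (fun j => ?_) ?_ (hasSum_mul_im_pow_mul hκ hb_abs w)
    (hasSum_mul_im_pow_mul hκ ha_abs w)
  · rw [ha_mul]
    exact mul_le_abs_of_abs_le_one (hb_abs j) _
  · rw [ha_mul]
    exact mul_lt_abs_of_ne_ite (hb i) (hw i) (ha i ▸ hi)

end SignSeries

theorem extreme_direction_unique_address_general (κ : ℂ)
    (h1 : ‖κ‖ < 1)
    (φ : ℝ)
    (him : ∀ j : ℕ, (κ ^ j * Complex.exp (φ * Complex.I)).im ≠ 0)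
    (aφ : ℕ → ℝ)
    (haφ : ∀ j, aφ j = if 0 < (κ ^ j * Complex.exp (φ * Complex.I)).im then 1 else -1)
    (z : ℂ) (hz : z = ∑' j : ℕ, (aφ j : ℂ) * κ ^ j) :
    (∀ b : ℕ → ℝ, (∀ j, b j = 1 ∨ b j = -1) →
      (((∑' j : ℕ, (b j : ℂ) * κ ^ j) * Complex.exp (φ * Complex.I)).im ≤
        (z * Complex.exp (φ * Complex.I)).im)) ∧
    (∀ b : ℕ → ℝ, (∀ j, b j = 1 ∨ b j = -1) →
      (∑' j : ℕ, (b j : ℂ) * κ ^ j) ≠ z →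
      (((∑' j : ℕ, (b j : ℂ) * κ ^ j) * Complex.exp (φ * Complex.I)).im <
        (z * Complex.exp (φ * Complex.I)).im)) ∧
    (∀ b : ℕ → ℝ, (∀ j, b j = 1 ∨ b j = -1) →
      (∑' j : ℕ, (b j : ℂ) * κ ^ j) = z → b = aφ) := by
  subst hz
  have hlt := fun b hb => im_tsum_mul_lt_of_eq_ite (b := b) h1 haφ him hb
  refine ⟨fun b hb => im_tsum_mul_le_of_eq_ite h1 haφ fun j =>
      abs_le_one_of_eq_one_or_eq_neg_one (hb j),
    fun b hb hne => hlt b hb fun hba => hne (hba ▸ rfl),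
    fun b hb heq => by_contra fun hba => (hlt b hb hba).ne (by rw [heq])⟩

theorem extreme_direction_unique_address (κ : ℂ) (h0 : 0 < ‖κ‖)
    (h1 : ‖κ‖ < 1) (hnr : κ.im ≠ 0)
    (φ : ℝ) (hφ0 : 0 ≤ φ) (hφ1 : φ < 2 * Real.pi)
    (him : ∀ j : ℕ, (κ ^ j * Complex.exp (φ * Complex.I)).im ≠ 0)
    (aφ : ℕ → ℝ)
    (haφ : ∀ j, aφ j = if 0 < (κ ^ j * Complex.exp (φ * Complex.I)).im then 1 else -1)
    (z : ℂ) (hz : z = ∑' j : ℕ, (aφ j : ℂ) * κ ^ j) :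
    (∀ b : ℕ → ℝ, (∀ j, b j = 1 ∨ b j = -1) →
      (((∑' j : ℕ, (b j : ℂ) * κ ^ j) * Complex.exp (φ * Complex.I)).im ≤
        (z * Complex.exp (φ * Complex.I)).im)) ∧
    (∀ b : ℕ → ℝ, (∀ j, b j = 1 ∨ b j = -1) →
      (∑' j : ℕ, (b j : ℂ) * κ ^ j) ≠ z →
      (((∑' j : ℕ, (b j : ℂ) * κ ^ j) * Complex.exp (φ * Complex.I)).im <
        (z * Complex.exp (φ * Complex.I)).im)) ∧
    (∀ b : ℕ → ℝ, (∀ j, b j = 1 ∨ b j = -1) →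
      (∑' j : ℕ, (b j : ℂ) * κ ^ j) = z → b = aφ) :=
  extreme_direction_unique_address_general κ h1 φ him aφ haφ z hz
end

section
/- Let κ = ρe^{2πip/q} with 0 < ρ < 1, gcd(p,q) = 1, q odd, q ≥ 3, and set β = ρ^{−q} > 1. Suppose (a_k)_{k≥0} ∈ {−1,+1}^ℕ is a unique address in A_κ, i.e. π(a) = Σ a_k κ^k has no other representation Σ b_k κ^k with b ∈ {−1,+1}^ℕ. Then for each ℓ ∈ {0,…,q−1}, the real number Σ_{j≥0} a_{qj+ℓ} β^{−j} has a unique representation of the form Σ_{j≥0} c_j β^{−j} with c_j ∈ {−1,+1} (namely c_j = a_{qj+ℓ}). -/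
open Complex

/-
Overwrite the residue class `l` mod `q` of the address `a` by the competing expansion `c`, getting a
new sign sequence `b`. The difference `b - a` is supported on `q ℕ + l`, so its `κ`-series is
`κ ^ l` times a series in `κ ^ q = ρ ^ q`, namely the difference of the two `ρ ^ q`-expansions,
which vanishes. Hence `π(b) = π(a)`, uniqueness gives `b = a`, and reading off the class `l`
gives `c j = a (q j + l)`.
-/

section Splice

variable {α : Type*}

def splice (q l : ℕ) (c a : ℕ → α) : ℕ → α :=
  fun k => if k % q = l then c (k / q) else a k

variable {q l : ℕ} {c a : ℕ → α}

theorem splice_mul_add (hl : l < q) (j : ℕ) : splice q l c a (q * j + l) = c j := by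
  have hq : 0 < q := by omega
  simp [splice, Nat.mod_eq_of_lt hl, Nat.mul_add_div hq, Nat.div_eq_of_lt hl]

theorem splice_of_mod_ne {k : ℕ} (hk : k % q ≠ l) : splice q l c a k = a k :=
  if_neg hk

theorem splice_mem {S : Set α} (hc : ∀ j, c j ∈ S) (ha : ∀ k, a k ∈ S) (k : ℕ) :
    splice q l c a k ∈ S := by
  unfold splice
  split_ifs
  exacts [hc _, ha _]

end Splice

theorem tsum_mul_pow_eq_of_mod_ne {R : Type*} [Field R] [TopologicalSpace R]
    [IsTopologicalRing R] [T2Space R] {q l : ℕ} (hq : 0 < q) {d : ℕ → R}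
    (hd : ∀ k, k % q ≠ l → d k = 0) (z : R) :
    ∑' k, d k * z ^ k = z ^ l * ∑' j, d (q * j + l) * (z ^ q) ^ j := by
  have hinj : Function.Injective fun j => q * j + l := fun x y hxy => by
    simpa [hq.ne'] using hxy
  have hsupp : Function.support (fun k => d k * z ^ k) ⊆ Set.range fun j => q * j + l := by
    intro k hk
    have hkl : k % q = l := by
      by_contra h
      exact hk (by simp [hd k h])
    exact ⟨k / q, by simp only [← hkl, Nat.div_add_mod]⟩
  rw [← hinj.tsum_eq hsupp, ← tsum_mul_left]
  congr 1 with j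
  ring

theorem summable_mul_pow_of_norm_le_one {𝕜 : Type*} [NormedField 𝕜] [CompleteSpace 𝕜]
    {s : ℕ → 𝕜} (hs : ∀ k, ‖s k‖ ≤ 1) {z : 𝕜} (hz : ‖z‖ < 1) :
    Summable fun k => s k * z ^ k := by
  refine .of_norm_bounded (summable_geometric_of_lt_one (norm_nonneg z) hz) fun k => ?_
  rw [norm_mul, norm_pow]
  exact mul_le_of_le_one_left (by positivity) (hs k)

theorem abs_le_one_of_eq_one_or_eq_neg_one_s11 {x : ℝ} (hx : x = 1 ∨ x = -1) : |x| ≤ 1 := by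
  rcases hx with rfl | rfl <;> simp

theorem norm_ofReal_mul_exp_two_pi_I {ρ : ℝ} (hρ : 0 ≤ ρ) (p q : ℕ) :
    ‖(ρ : ℂ) * exp (2 * Real.pi * I * p / q)‖ = ρ := by
  have harg : 2 * Real.pi * I * p / q = ((2 * Real.pi * p / q : ℝ) : ℂ) * I := by
    push_cast
    ring
  rw [norm_mul, harg, norm_exp_ofReal_mul_I, norm_real, Real.norm_of_nonneg hρ, mul_one]

theorem ofReal_mul_exp_two_pi_I_pow (ρ : ℝ) (p : ℕ) {q : ℕ} (hq : q ≠ 0) :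
    ((ρ : ℂ) * exp (2 * Real.pi * I * p / q)) ^ q = ((ρ ^ q : ℝ) : ℂ) := by
  have harg : (q : ℂ) * (2 * Real.pi * I * p / q) = p * (2 * Real.pi * I) := by
    field_simp
  rw [mul_pow, ← exp_nat_mul, harg, exp_nat_mul_two_pi_mul_I, mul_one, ofReal_pow]

theorem unique_address_projects_to_unique_beta_expansion_general
    (ρ : ℝ) (hρ0 : 0 < ρ) (hρ1 : ρ < 1)
    (p q : ℕ)
    (κ : ℂ) (hκ : κ = (ρ : ℂ) * Complex.exp (2 * Real.pi * Complex.I * p / q))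
    (a : ℕ → ℝ) (ha : ∀ k, a k = 1 ∨ a k = -1)
    (huniq : ∀ b : ℕ → ℝ, (∀ k, b k = 1 ∨ b k = -1) →
      (∑' k : ℕ, (b k : ℂ) * κ ^ k) = (∑' k : ℕ, (a k : ℂ) * κ ^ k) → b = a) :
    ∀ l < q, ∀ c : ℕ → ℝ, (∀ j, c j = 1 ∨ c j = -1) →
      (∑' j : ℕ, c j * (ρ ^ q) ^ j) = (∑' j : ℕ, a (q * j + l) * (ρ ^ q) ^ j) →
      c = fun j => a (q * j + l) := by
  intro l hl c hc hsum
  have hq : 0 < q := by omega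
  have hρq : ‖ρ ^ q‖ < 1 := by
    rw [Real.norm_of_nonneg (by positivity)]
    exact pow_lt_one₀ hρ0.le hρ1 hq.ne'
  have hκ1 : ‖κ‖ < 1 := by rwa [hκ, norm_ofReal_mul_exp_two_pi_I hρ0.le]
  have hκq : κ ^ q = ((ρ ^ q : ℝ) : ℂ) := hκ ▸ ofReal_mul_exp_two_pi_I_pow ρ p hq.ne'
  have hsummable {s : ℕ → ℝ} (hs : ∀ k, s k = 1 ∨ s k = -1) {z : ℂ} (hz : ‖z‖ < 1) :
      Summable fun k => (s k : ℂ) * z ^ k :=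
    summable_mul_pow_of_norm_le_one (fun k => by
      simpa using abs_le_one_of_eq_one_or_eq_neg_one_s11 (hs k)) hz
  have hreal : ∑' j, (c j - a (q * j + l)) * (ρ ^ q) ^ j = 0 := by
    have hs {s : ℕ → ℝ} (hs : ∀ k, s k = 1 ∨ s k = -1) : Summable fun j => s j * (ρ ^ q) ^ j :=
      summable_mul_pow_of_norm_le_one (fun k => abs_le_one_of_eq_one_or_eq_neg_one_s11 (hs k)) hρq
    simp_rw [sub_mul]
    rw [(hs hc).tsum_sub (hs fun j => ha _), hsum, sub_self]
  set b := splice q l c a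
  have hb : ∀ k, b k = 1 ∨ b k = -1 := splice_mem (S := {1, -1}) hc ha
  have hπ : ∑' k, (b k : ℂ) * κ ^ k = ∑' k, (a k : ℂ) * κ ^ k := by
    rw [← sub_eq_zero, ← (hsummable hb hκ1).tsum_sub (hsummable ha hκ1)]
    simp_rw [← sub_mul, ← ofReal_sub]
    rw [tsum_mul_pow_eq_of_mod_ne (l := l) hq (fun k hk => by simp [b, splice_of_mod_ne hk]), hκq]
    simp_rw [b, splice_mul_add hl, ← ofReal_pow, ← ofReal_mul, ← ofReal_tsum, hreal]
    simp
  funext j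
  rw [← huniq b hb hπ]
  exact (splice_mul_add hl j).symm

theorem unique_address_projects_to_unique_beta_expansion
    (ρ : ℝ) (hρ0 : 0 < ρ) (hρ1 : ρ < 1)
    (p q : ℕ) (hpq : Nat.Coprime p q) (hq_odd : Odd q) (hq3 : 3 ≤ q)
    (κ : ℂ) (hκ : κ = (ρ : ℂ) * Complex.exp (2 * Real.pi * Complex.I * p / q))
    (a : ℕ → ℝ) (ha : ∀ k, a k = 1 ∨ a k = -1)
    (huniq : ∀ b : ℕ → ℝ, (∀ k, b k = 1 ∨ b k = -1) →
      (∑' k : ℕ, (b k : ℂ) * κ ^ k) = (∑' k : ℕ, (a k : ℂ) * κ ^ k) → b = a) :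
    ∀ l < q, ∀ c : ℕ → ℝ, (∀ j, c j = 1 ∨ c j = -1) →
      (∑' j : ℕ, c j * (ρ ^ q) ^ j) = (∑' j : ℕ, a (q * j + l) * (ρ ^ q) ^ j) →
      c = fun j => a (q * j + l) :=
  unique_address_projects_to_unique_beta_expansion_general ρ hρ0 hρ1 p q κ hκ a ha huniq
end

section
/- Let 1 < β ≤ 2 and J = { Σ_{k≥0} b_k β^{−k} : b_k ∈ {−1,+1} }. Then J is the closed interval [−β/(β−1), β/(β−1)]. -/
/-!
Every ±1 series is dominated termwise by the geometric series `∑ β⁻¹ ^ k = β / (β - 1)`, which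
gives one inclusion. Conversely, the greedy map `y ↦ β (y - sign y)` sends `[-β/(β-1), β/(β-1)]`
into itself exactly when `β ≤ 2`; iterating it from `x` yields digits whose partial sums differ
from `x` by `β⁻ⁿ` times a bounded orbit point.
-/

open Filter Topology

section GeometricBound

variable {r : ℝ} {b : ℕ → ℝ}

lemma norm_mul_pow_le_pow (hr : 0 ≤ r) (hb : ∀ k, |b k| ≤ 1) (k : ℕ) :
    ‖b k * r ^ k‖ ≤ r ^ k := by
  rw [norm_mul, Real.norm_eq_abs, norm_pow, Real.norm_of_nonneg hr]
  exact mul_le_of_le_one_left (pow_nonneg hr k) (hb k)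

lemma summable_mul_pow_of_abs_le_one_s12 (hr0 : 0 ≤ r) (hr1 : r < 1) (hb : ∀ k, |b k| ≤ 1) :
    Summable fun k => b k * r ^ k :=
  (summable_geometric_of_lt_one hr0 hr1).of_norm_bounded (norm_mul_pow_le_pow hr0 hb)

lemma abs_tsum_mul_pow_le (hr0 : 0 ≤ r) (hr1 : r < 1) (hb : ∀ k, |b k| ≤ 1) :
    |∑' k, b k * r ^ k| ≤ (1 - r)⁻¹ :=
  tsum_of_norm_bounded (hasSum_geometric_of_lt_one hr0 hr1) (norm_mul_pow_le_pow hr0 hb)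

end GeometricBound

lemma one_sub_inv_inv_eq_div {β : ℝ} (h1 : 1 < β) : (1 - β⁻¹)⁻¹ = β / (β - 1) := by
  have : β - 1 ≠ 0 := by linarith
  have : β ≠ 0 := by positivity
  field_simp

/-- The sign of `y`, except that `0` gets the digit `1`. -/
noncomputable def pmDigit (y : ℝ) : ℝ := if 0 ≤ y then 1 else -1

lemma pmDigit_eq_one_or_eq_neg_one (y : ℝ) : pmDigit y = 1 ∨ pmDigit y = -1 := by
  unfold pmDigit; split_ifs <;> simp

noncomputable def greedyOrbit (β x : ℝ) : ℕ → ℝ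
  | 0 => x
  | n + 1 => β * (greedyOrbit β x n - pmDigit (greedyOrbit β x n))

section Greedy

variable {β : ℝ}

lemma abs_greedy_step_le (h1 : 1 < β) (h2 : β ≤ 2) {y : ℝ} (hy : |y| ≤ β / (β - 1)) :
    |β * (y - pmDigit y)| ≤ β / (β - 1) := by
  have hβ1 : 0 < β - 1 := by linarith
  -- the endpoint `β / (β - 1)` is fixed by `y ↦ β (y - 1)`, and `β ≤ β / (β - 1)` iff `β ≤ 2`
  have hS : β * (β / (β - 1) - 1) = β / (β - 1) := by field_simp; ring
  have hβS : β ≤ β / (β - 1) := by rw [le_div_iff₀ hβ1]; nlinarith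
  rw [abs_le] at hy ⊢
  unfold pmDigit
  split_ifs with h <;> constructor <;> nlinarith

lemma abs_greedyOrbit_le (h1 : 1 < β) (h2 : β ≤ 2) {x : ℝ} (hx : |x| ≤ β / (β - 1)) (n : ℕ) :
    |greedyOrbit β x n| ≤ β / (β - 1) := by
  induction n with
  | zero => exact hx
  | succ n ih => exact abs_greedy_step_le h1 h2 ih

lemma eq_sum_add_greedyOrbit (hβ : β ≠ 0) (x : ℝ) (n : ℕ) :
    x = ∑ k ∈ Finset.range n, pmDigit (greedyOrbit β x k) * β⁻¹ ^ k
      + β⁻¹ ^ n * greedyOrbit β x n := by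
  induction n with
  | zero => simp [greedyOrbit]
  | succ n ih =>
    nth_rw 1 [ih]
    rw [Finset.sum_range_succ, greedyOrbit, pow_succ, mul_assoc (β⁻¹ ^ n), inv_mul_cancel_left₀ hβ]
    ring

lemma hasSum_pmDigit_greedyOrbit (h1 : 1 < β) (h2 : β ≤ 2) {x : ℝ} (hx : |x| ≤ β / (β - 1)) :
    HasSum (fun k => pmDigit (greedyOrbit β x k) * β⁻¹ ^ k) x := by
  have hr0 : 0 ≤ β⁻¹ := by positivity
  have hr1 : β⁻¹ < 1 := inv_lt_one_of_one_lt₀ h1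
  have hdigit (k : ℕ) : |pmDigit (greedyOrbit β x k)| ≤ 1 := by
    rcases pmDigit_eq_one_or_eq_neg_one (greedyOrbit β x k) with h | h <;> simp [h]
  have htail : Tendsto (fun n => β⁻¹ ^ n * greedyOrbit β x n) atTop (𝓝 0) :=
    (tendsto_pow_atTop_nhds_zero_of_lt_one hr0 hr1).zero_mul_isBoundedUnder_le
      (isBoundedUnder_of ⟨_, abs_greedyOrbit_le h1 h2 hx⟩)
  rw [(summable_mul_pow_of_abs_le_one_s12 hr0 hr1 hdigit).hasSum_iff_tendsto_nat]
  have hpartial : (fun n => ∑ k ∈ Finset.range n, pmDigit (greedyOrbit β x k) * β⁻¹ ^ k)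
      = fun n => x - β⁻¹ ^ n * greedyOrbit β x n := by
    funext n
    linarith [eq_sum_add_greedyOrbit (by positivity : β ≠ 0) x n]
  rw [hpartial]
  simpa only [sub_zero] using (tendsto_const_nhds (x := x)).sub htail

end Greedy

theorem pm_beta_expansions_fill_interval (β : ℝ) (h1 : 1 < β) (h2 : β ≤ 2) :
    {x : ℝ | ∃ b : ℕ → ℝ, (∀ k, b k = 1 ∨ b k = -1) ∧ x = ∑' k : ℕ, b k * (β⁻¹) ^ k} =
      Set.Icc (-(β / (β - 1))) (β / (β - 1)) := by
  ext x
  rw [Set.mem_Icc, ← abs_le]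
  constructor
  · rintro ⟨b, hb, rfl⟩
    rw [← one_sub_inv_inv_eq_div h1]
    refine abs_tsum_mul_pow_le (by positivity) (inv_lt_one_of_one_lt₀ h1) fun k => ?_
    rcases hb k with h | h <;> simp [h]
  · intro hx
    exact ⟨_, fun k => pmDigit_eq_one_or_eq_neg_one _,
      (hasSum_pmDigit_greedyOrbit h1 h2 hx).tsum_eq.symm⟩
end
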